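/- For every complex number q with |q| < 1, the following identity holds: Σ_{n≥0} (q; q)_{2n} q^{4n} / (q^4; q^4)_n = q/(1+q^3) + ((q; q)_∞/(q^4; q^4)_∞) · Σ_{m≥0} (−q^2; q^2)_m q^{2m} / (q; q^2)_m. -/

import Mathlib

/-- The finite q-Pochhammer symbol `(a; q)_n = ∏_{j=0}^{n-1} (1 - a q^j)`. -/
noncomputable def qPoch (a q : ℂ) (n : ℕ) : ℂ := ∏ j ∈ Finset.range n, (1 - a * q ^ j)

/-- The infinite q-Pochhammer symbol `(a; q)_∞ = ∏_{j=0}^{∞} (1 - a q^j)`. -/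
noncomputable def qPochInf (a q : ℂ) : ℂ := ∏' j : ℕ, (1 - a * q ^ j)

/-!
Since `(q; q)_{2n} = (q; q²)_n (q²; q²)_n` and `(q⁴; q⁴)_n = (q²; q²)_n (-q²; q²)_n`, the left-hand
series is `∑ ρ_n q^{4n}` with `ρ_n = (q; q²)_n / (-q²; q²)_n`, and the right-hand one is
`∑ q^{2n} / ρ_n`. Both telescope:
`(1 + q³) ∑_{n<N} ρ_n q^{4n} = 2q - (q^{4N} + q^{2N+1} + q - 1) ρ_N` and
`(1 + q³) ∑_{n<N} q^{2n} / ρ_n = 1 - q - (q^{2N} - q) / ρ_N`.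
As `ρ_N → P = (q; q)_∞ / (q⁴; q⁴)_∞ ≠ 0`, the two series equal `(2q + (1 - q) P) / (1 + q³)` and
`(1 - q + q / P) / (1 + q³)`, and the identity is a rearrangement of these values.
-/

open Filter Finset Topology

theorem norm_pow_lt_one {q : ℂ} (hq : ‖q‖ < 1) {k : ℕ} (hk : k ≠ 0) : ‖q ^ k‖ < 1 := by
  rw [norm_pow]
  exact pow_lt_one₀ (norm_nonneg q) hq hk

theorem tendsto_pow_mul_nhds_zero {q : ℂ} (hq : ‖q‖ < 1) {k : ℕ} (hk : k ≠ 0) :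
    Tendsto (fun N : ℕ ↦ q ^ (k * N)) atTop (𝓝 0) := by
  simpa only [pow_mul] using tendsto_pow_atTop_nhds_zero_of_norm_lt_one (norm_pow_lt_one hq hk)

theorem summable_mul_pow_of_tendsto {x : ℕ → ℂ} {L : ℂ} (hx : Tendsto x atTop (𝓝 L)) {r : ℂ}
    (hr : ‖r‖ < 1) : Summable fun n ↦ x n * r ^ n := by
  obtain ⟨C, hC⟩ := hx.norm.bddAbove_range
  refine .of_norm_bounded ((summable_geometric_of_lt_one (norm_nonneg r) hr).mul_left C)
    fun n ↦ ?_
  rw [norm_mul, norm_pow]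
  exact mul_le_mul_of_nonneg_right (hC ⟨n, rfl⟩) (pow_nonneg (norm_nonneg r) n)

theorem tsum_eq_of_tendsto_mul_sum_range {f : ℕ → ℂ} (hf : Summable f) {c L : ℂ}
    (h : Tendsto (fun N ↦ c * ∑ n ∈ range N, f n) atTop (𝓝 L)) : c * ∑' n, f n = L := by
  rw [← tsum_mul_left]
  exact ((hf.mul_left c).hasSum_iff_tendsto_nat.2 (by simpa [mul_sum] using h)).tsum_eq

theorem qPoch_succ (a q : ℂ) (n : ℕ) : qPoch a q (n + 1) = qPoch a q n * (1 - a * q ^ n) :=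
  prod_range_succ _ n

theorem qPoch_two_mul (a q : ℂ) (n : ℕ) :
    qPoch a q (2 * n) = qPoch a (q ^ 2) n * qPoch (a * q) (q ^ 2) n := by
  induction n with
  | zero => simp [qPoch]
  | succ n ih =>
    rw [show 2 * (n + 1) = 2 * n + 1 + 1 by ring, qPoch_succ, qPoch_succ, ih, qPoch_succ,
      qPoch_succ]
    ring

theorem qPoch_sq (a q : ℂ) (n : ℕ) : qPoch (a ^ 2) (q ^ 2) n = qPoch a q n * qPoch (-a) q n := by
  rw [qPoch, qPoch, qPoch, ← prod_mul_distrib]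
  exact prod_congr rfl fun j _ ↦ by ring

theorem one_sub_mul_pow_ne_zero {a q : ℂ} (ha : ‖a‖ < 1) (hq : ‖q‖ ≤ 1) (j : ℕ) :
    1 - a * q ^ j ≠ 0 := by
  intro h
  have : ‖a * q ^ j‖ < 1 := by
    rw [norm_mul, norm_pow]
    exact mul_lt_one_of_nonneg_of_lt_one_left (norm_nonneg a) ha (pow_le_one₀ (norm_nonneg q) hq)
  simp [← sub_eq_zero.1 h] at this

theorem qPoch_ne_zero {a q : ℂ} (ha : ‖a‖ < 1) (hq : ‖q‖ ≤ 1) (n : ℕ) : qPoch a q n ≠ 0 :=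
  prod_ne_zero_iff.2 fun j _ ↦ one_sub_mul_pow_ne_zero ha hq j

theorem summable_norm_mul_pow (a : ℂ) {q : ℂ} (hq : ‖q‖ < 1) :
    Summable fun j : ℕ ↦ ‖a * q ^ j‖ := by
  simpa only [norm_mul, norm_pow] using
    (summable_geometric_of_lt_one (norm_nonneg q) hq).mul_left ‖a‖

theorem tendsto_qPoch (a : ℂ) {q : ℂ} (hq : ‖q‖ < 1) :
    Tendsto (qPoch a q) atTop (𝓝 (qPochInf a q)) := by
  unfold qPoch qPochInf
  simpa only [sub_eq_add_neg] using (multipliable_one_add_of_summable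
    (by simpa only [norm_neg] using summable_norm_mul_pow a hq)).hasProd.tendsto_prod_nat

theorem qPochInf_ne_zero {a q : ℂ} (ha : ‖a‖ < 1) (hq : ‖q‖ < 1) : qPochInf a q ≠ 0 := by
  simpa [qPochInf, sub_eq_add_neg] using tprod_one_add_ne_zero_of_summable
    (fun j ↦ by simpa only [sub_eq_add_neg] using one_sub_mul_pow_ne_zero ha hq.le j)
    (by simpa only [norm_neg] using summable_norm_mul_pow a hq)

theorem qPoch_two_mul_div_qPoch_pow_four {q : ℂ} (hq : ‖q‖ < 1) (n : ℕ) :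
    qPoch q q (2 * n) / qPoch (q ^ 4) (q ^ 4) n =
      qPoch q (q ^ 2) n / qPoch (-q ^ 2) (q ^ 2) n := by
  have hq2 : ‖q ^ 2‖ < 1 := norm_pow_lt_one hq two_ne_zero
  rw [qPoch_two_mul, ← sq, show q ^ 4 = (q ^ 2) ^ 2 by ring, qPoch_sq (q ^ 2) (q ^ 2) n]
  rw [mul_comm (qPoch (q ^ 2) (q ^ 2) n) (qPoch (-q ^ 2) (q ^ 2) n)]
  exact mul_div_mul_right _ _ (qPoch_ne_zero hq2 hq2.le n)

theorem one_add_pow_three_mul_sum_range_qPoch_div_mul_pow_four {q : ℂ}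
    (hc : ∀ n, qPoch (-q ^ 2) (q ^ 2) n ≠ 0) (N : ℕ) :
    (1 + q ^ 3) * ∑ n ∈ range N, qPoch q (q ^ 2) n / qPoch (-q ^ 2) (q ^ 2) n * q ^ (4 * n) =
      2 * q - (q ^ (4 * N) + q ^ (2 * N + 1) + q - 1) *
        (qPoch q (q ^ 2) N / qPoch (-q ^ 2) (q ^ 2) N) := by
  induction N with
  | zero => simp [qPoch]; ring
  | succ N ih =>
    have hstep : 1 - -q ^ 2 * (q ^ 2) ^ N = 1 + q ^ (2 * N + 2) := by ring
    have hcN := hc (N + 1)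
    rw [qPoch_succ, hstep, mul_ne_zero_iff] at hcN
    rw [sum_range_succ, mul_add, ih, qPoch_succ, qPoch_succ, hstep]
    field_simp [hcN.1, hcN.2]
    ring

theorem one_add_pow_three_mul_sum_range_qPoch_mul_pow_two_div {q : ℂ}
    (ha : ∀ n, qPoch q (q ^ 2) n ≠ 0) (N : ℕ) :
    (1 + q ^ 3) * ∑ n ∈ range N, qPoch (-q ^ 2) (q ^ 2) n * q ^ (2 * n) / qPoch q (q ^ 2) n =
      1 - q - (q ^ (2 * N) - q) * (qPoch (-q ^ 2) (q ^ 2) N / qPoch q (q ^ 2) N) := by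
  induction N with
  | zero => simp [qPoch]
  | succ N ih =>
    have hstep : 1 - q * (q ^ 2) ^ N = 1 - q ^ (2 * N + 1) := by ring
    have haN := ha (N + 1)
    rw [qPoch_succ, hstep, mul_ne_zero_iff] at haN
    rw [sum_range_succ, mul_add, ih, qPoch_succ, qPoch_succ, hstep]
    field_simp [haN.1, haN.2]
    ring

theorem qPochInf_div_qPochInf_pow_four_ne_zero {q : ℂ} (hq : ‖q‖ < 1) :
    qPochInf q q / qPochInf (q ^ 4) (q ^ 4) ≠ 0 :=
  have hq4 : ‖q ^ 4‖ < 1 := norm_pow_lt_one hq four_ne_zero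
  div_ne_zero (qPochInf_ne_zero hq hq) (qPochInf_ne_zero hq4 hq4)

theorem tendsto_qPoch_div_qPoch {q : ℂ} (hq : ‖q‖ < 1) :
    Tendsto (fun n ↦ qPoch q (q ^ 2) n / qPoch (-q ^ 2) (q ^ 2) n) atTop
      (𝓝 (qPochInf q q / qPochInf (q ^ 4) (q ^ 4))) := by
  have hq4 : ‖q ^ 4‖ < 1 := norm_pow_lt_one hq four_ne_zero
  simp_rw [← qPoch_two_mul_div_qPoch_pow_four hq]
  exact ((tendsto_qPoch q hq).comp (tendsto_id.const_mul_atTop' two_pos)).div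
    (tendsto_qPoch _ hq4) (qPochInf_ne_zero hq4 hq4)

theorem one_add_pow_three_mul_tsum_qPoch_div_mul_pow_four {q : ℂ} (hq : ‖q‖ < 1) :
    (1 + q ^ 3) * ∑' n, qPoch q (q ^ 2) n / qPoch (-q ^ 2) (q ^ 2) n * q ^ (4 * n) =
      2 * q + (1 - q) * (qPochInf q q / qPochInf (q ^ 4) (q ^ 4)) := by
  have hρ := tendsto_qPoch_div_qPoch hq
  have hq2 : ‖q ^ 2‖ < 1 := norm_pow_lt_one hq two_ne_zero
  refine tsum_eq_of_tendsto_mul_sum_range ?_ ?_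
  · simpa only [pow_mul] using summable_mul_pow_of_tendsto hρ (norm_pow_lt_one hq four_ne_zero)
  · simp_rw [one_add_pow_three_mul_sum_range_qPoch_div_mul_pow_four
      (qPoch_ne_zero (by rwa [norm_neg]) hq2.le)]
    have := ((((tendsto_pow_mul_nhds_zero hq four_ne_zero).add
      ((tendsto_pow_mul_nhds_zero hq two_ne_zero).mul_const q)).add_const q).sub_const 1).mul hρ
    convert this.const_sub (2 * q) using 2 with N
    · ring
    · ring

theorem one_add_pow_three_mul_tsum_qPoch_mul_pow_two_div {q : ℂ} (hq : ‖q‖ < 1) :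
    (1 + q ^ 3) * ∑' n, qPoch (-q ^ 2) (q ^ 2) n * q ^ (2 * n) / qPoch q (q ^ 2) n =
      1 - q + q / (qPochInf q q / qPochInf (q ^ 4) (q ^ 4)) := by
  have hρ := (tendsto_qPoch_div_qPoch hq).inv₀ (qPochInf_div_qPochInf_pow_four_ne_zero hq)
  simp only [inv_div] at hρ
  have hq2 : ‖q ^ 2‖ < 1 := norm_pow_lt_one hq two_ne_zero
  refine tsum_eq_of_tendsto_mul_sum_range ?_ ?_
  · refine (summable_mul_pow_of_tendsto hρ hq2).congr fun n ↦ ?_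
    rw [pow_mul]
    ring
  · simp_rw [one_add_pow_three_mul_sum_range_qPoch_mul_pow_two_div (qPoch_ne_zero hq hq2.le)]
    have := ((tendsto_pow_mul_nhds_zero hq two_ne_zero).sub_const q).mul hρ
    convert this.const_sub (1 - q) using 2
    field_simp
    ring

theorem stmt_15 (q : ℂ) (hq : ‖q‖ < 1) :
    ∑' n : ℕ, qPoch q q (2 * n) * q ^ (4 * n) / qPoch (q ^ 4) (q ^ 4) n =
      q / (1 + q ^ 3) + (qPochInf q q / qPochInf (q ^ 4) (q ^ 4)) *
        ∑' m : ℕ, qPoch (-q ^ 2) (q ^ 2) m * q ^ (2 * m) / qPoch q (q ^ 2) m := by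
  have hP := qPochInf_div_qPochInf_pow_four_ne_zero hq
  have h3 : 1 + q ^ 3 ≠ 0 := by
    rw [show 1 + q ^ 3 = 1 - -q * q ^ 2 by ring]
    exact one_sub_mul_pow_ne_zero (by rwa [norm_neg]) hq.le 2
  simp_rw [mul_div_right_comm _ (q ^ (4 * _)), qPoch_two_mul_div_qPoch_pow_four hq]
  apply mul_left_cancel₀ h3
  rw [one_add_pow_three_mul_tsum_qPoch_div_mul_pow_four hq, mul_add, mul_left_comm,
    one_add_pow_three_mul_tsum_qPoch_mul_pow_two_div hq]
  generalize qPochInf q q / qPochInf (q ^ 4) (q ^ 4) = P at hP ⊢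
  field_simp
  ring
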